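/- Suppose a_tgc : (0, δ) → ℝ is differentiable with limit of derivative L⁺ = lim_{b→0⁺} a_tgc'(b) ∈ (9/8, 23/8), and γ : (−δ,δ) → ℝ is C¹ with γ(0) = 2, γ'(0) = 23/8, and a_tgc(b) → 2 as b → 0⁺. If additionally Γ is C¹ near (2,0) with Γ(γ(b),b) = 0, ∂Γ/∂a < 0 near (2,0), and Γ(a,0) < 0 for a ∈ (2, 2+δ), then there exists δ' > 0 such that Γ(a_tgc(b), b) > 0 for all b ∈ (0, δ'). -/

import Mathlib

/-!
Both curves leave `(2, 0)` along lines: the slope bound `L < 23/8` gives, for any `M` strictly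
between, `a_tgc(b) ≤ 2 + M b < γ(b)` for small `b > 0`. Since `Γ(·, b)` is strictly decreasing
near `(2, 0)` and vanishes at `γ(b)`, it is positive at `a_tgc(b)`.
-/

open Set Filter Topology

theorem eventually_le_add_mul_of_deriv_le {f : ℝ → ℝ} {x₀ y₀ M : ℝ}
    (hdiff : ∀ᶠ x in 𝓝[>] x₀, DifferentiableAt ℝ f x)
    (hf : Tendsto f (𝓝[>] x₀) (𝓝 y₀))
    (hderiv : ∀ᶠ x in 𝓝[>] x₀, deriv f x ≤ M) :
    ∀ᶠ x in 𝓝[>] x₀, f x ≤ y₀ + M * (x - x₀) := by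
  obtain ⟨u, hu, hsub⟩ := mem_nhdsGT_iff_exists_Ioo_subset.mp (hdiff.and hderiv)
  have hg : ∀ x ∈ Ioo x₀ u, HasDerivAt (fun x => f x - M * x) (deriv f x - M * 1) x :=
    fun x hx => (hsub hx).1.hasDerivAt.sub ((hasDerivAt_id x).const_mul M)
  have hanti : AntitoneOn (fun x => f x - M * x) (Ioo x₀ u) := by
    refine antitoneOn_of_deriv_nonpos (convex_Ioo x₀ u)
      (fun x hx => (hg x hx).continuousAt.continuousWithinAt) ?_ ?_ <;>
      rw [interior_Ioo]
    · exact fun x hx => (hg x hx).differentiableAt.differentiableWithinAt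
    · intro x hx
      rw [(hg x hx).deriv]
      linarith [(hsub hx).2]
  filter_upwards [Ioo_mem_nhdsGT hu] with x hx
  have hlim : Tendsto (fun y => f y - M * y) (𝓝[>] x₀) (𝓝 (y₀ - M * x₀)) :=
    hf.sub ((continuous_const_mul M).tendsto x₀ |>.mono_left nhdsWithin_le_nhds)
  have hle : f x - M * x ≤ y₀ - M * x₀ := by
    refine ge_of_tendsto hlim ?_
    filter_upwards [Ioo_mem_nhdsGT hx.1] with y hy
    exact hanti ⟨hy.1, hy.2.trans hx.2⟩ hx hy.2.le
  linarith

theorem HasDerivAt.eventually_add_mul_lt {f : ℝ → ℝ} {f' x₀ m : ℝ} (hf : HasDerivAt f f' x₀)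
    (hm : m < f') : ∀ᶠ x in 𝓝[>] x₀, f x₀ + m * (x - x₀) < f x := by
  filter_upwards [(hasDerivAt_iff_tendsto_slope_left_right.mp hf).2.eventually_const_lt hm,
    self_mem_nhdsWithin] with x hslope hx
  rw [slope_def_field, lt_div_iff₀ (sub_pos.mpr hx)] at hslope
  linarith

theorem exists_strictAntiOn_fst_of_eventually_fderiv_neg {Γ : ℝ × ℝ → ℝ} {p : ℝ × ℝ}
    (h : ∀ᶠ q in 𝓝 p, DifferentiableAt ℝ Γ q ∧ fderiv ℝ Γ q (1, 0) < 0) :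
    ∃ r > 0, ∀ b ∈ Metric.ball p.2 r,
      StrictAntiOn (fun a => Γ (a, b)) (Metric.ball p.1 r) := by
  obtain ⟨r, hr, hball⟩ := Metric.eventually_nhds_iff.mp h
  refine ⟨r, hr, fun b hb => ?_⟩
  have hΓb : ∀ a ∈ Metric.ball p.1 r,
      DifferentiableAt ℝ Γ (a, b) ∧ fderiv ℝ Γ (a, b) (1, 0) < 0 := fun a ha =>
    hball (by rw [Prod.dist_eq]; exact max_lt ha hb)
  have hg : ∀ a ∈ Metric.ball p.1 r,
      HasDerivAt (fun a => Γ (a, b)) (fderiv ℝ Γ (a, b) (1, 0)) a :=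
    fun a ha => (hΓb a ha).1.hasFDerivAt.comp_hasDerivAt a
      ((hasDerivAt_id a).prodMk (hasDerivAt_const a b))
  refine strictAntiOn_of_deriv_neg (convex_ball p.1 r)
    (fun a ha => (hg a ha).continuousAt.continuousWithinAt) ?_
  rw [Metric.isOpen_ball.interior_eq]
  intro a ha
  rw [(hg a ha).deriv]
  exact (hΓb a ha).2

theorem nondegeneracy_from_slopes_general (δ : ℝ) (hδ : 0 < δ)
    (atgc γ : ℝ → ℝ) (Γ : ℝ × ℝ → ℝ) (L : ℝ)
    (hdiff : ∀ b ∈ Ioo (0 : ℝ) δ, DifferentiableAt ℝ atgc b)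
    (hL : Tendsto (deriv atgc) (nhdsWithin 0 (Ioi 0)) (nhds L))
    (hLmem : L ∈ Ioo (9 / 8 : ℝ) (23 / 8))
    (hγ : ContDiffOn ℝ 1 γ (Ioo (-δ) δ))
    (hγ0 : γ 0 = 2) (hγ' : deriv γ 0 = 23 / 8)
    (hlim : Tendsto atgc (nhdsWithin 0 (Ioi 0)) (nhds 2))
    (hΓC1 : ContDiffAt ℝ 1 Γ (2, 0))
    (hΓγ : ∀ b ∈ Ioo (-δ) δ, Γ (γ b, b) = 0)
    (hΓa : ∃ U ∈ nhds ((2 : ℝ), (0 : ℝ)), ∀ p ∈ U, fderiv ℝ Γ p (1, 0) < 0) :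
    ∃ δ' > 0, ∀ b ∈ Ioo (0 : ℝ) δ', Γ (atgc b, b) > 0 := by
  obtain ⟨M, hLM⟩ := exists_between hLmem.2
  have hIoo : Ioo (-δ) δ ∈ 𝓝 (0 : ℝ) := Ioo_mem_nhds (neg_neg_of_pos hδ) hδ
  have hγd : HasDerivAt γ (23 / 8) 0 :=
    hγ' ▸ ((hγ.differentiableOn one_ne_zero).differentiableAt hIoo).hasDerivAt
  have hatgc : ∀ᶠ b in 𝓝[>] 0, atgc b ≤ 2 + M * (b - 0) :=
    eventually_le_add_mul_of_deriv_le
      (mem_of_superset (Ioo_mem_nhdsGT hδ) hdiff) hlim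
      ((hL.eventually_lt_const hLM.1).mono fun _ h => h.le)
  have hγM : ∀ᶠ b in 𝓝[>] 0, γ 0 + M * (b - 0) < γ b :=
    hγd.eventually_add_mul_lt hLM.2
  obtain ⟨U, hU, hUneg⟩ := hΓa
  obtain ⟨r, hr, hanti⟩ := exists_strictAntiOn_fst_of_eventually_fderiv_neg (p := (2, 0)) <| by
    filter_upwards [hΓC1.eventually (by simp), hU] with q hq hqU
    exact ⟨hq.differentiableAt one_ne_zero, hUneg q hqU⟩
  have hγlim : Tendsto γ (𝓝[>] 0) (𝓝 2) :=
    hγ0 ▸ hγd.continuousAt.tendsto.mono_left nhdsWithin_le_nhds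
  have hnear : ∀ᶠ b in 𝓝[>] (0 : ℝ), b ∈ Metric.ball 0 r ∩ Ioo (-δ) δ :=
    nhdsWithin_le_nhds (inter_mem (Metric.ball_mem_nhds 0 hr) hIoo)
  obtain ⟨δ', hδ', hsub⟩ := mem_nhdsGT_iff_exists_Ioo_subset.mp <|
    hatgc.and <| hγM.and <| (hlim.eventually (Metric.ball_mem_nhds 2 hr)).and <|
      (hγlim.eventually (Metric.ball_mem_nhds 2 hr)).and hnear
  refine ⟨δ', hδ', fun b hb => ?_⟩
  obtain ⟨hab, hγb, haball, hγball, hbball, hbδ⟩ := hsub hb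
  calc Γ (atgc b, b) > Γ (γ b, b) := hanti b hbball haball hγball (by linarith)
    _ = 0 := hΓγ b hbδ

/-- Abstract form of the non-degeneracy argument (Theorem 1.2): since the slope of
the first-bifurcation curve `a_tgc` at `b = 0⁺` lies in `(9/8, 23/8)`, strictly
below the slope `23/8` of the zero locus `a = γ(b)` of `Γ`, and `Γ` decreases in
`a` near `(2,0)` with `Γ(a,0) < 0` for `a > 2`, the curve `a_tgc` lies on the side
where `Γ > 0` for small `b > 0`. -/
theorem nondegeneracy_from_slopes (δ : ℝ) (hδ : 0 < δ)
    (atgc γ : ℝ → ℝ) (Γ : ℝ × ℝ → ℝ) (L : ℝ)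
    (hdiff : ∀ b ∈ Ioo (0 : ℝ) δ, DifferentiableAt ℝ atgc b)
    (hL : Tendsto (deriv atgc) (nhdsWithin 0 (Ioi 0)) (nhds L))
    (hLmem : L ∈ Ioo (9 / 8 : ℝ) (23 / 8))
    (hγ : ContDiffOn ℝ 1 γ (Ioo (-δ) δ))
    (hγ0 : γ 0 = 2) (hγ' : deriv γ 0 = 23 / 8)
    (hlim : Tendsto atgc (nhdsWithin 0 (Ioi 0)) (nhds 2))
    (hΓC1 : ContDiffAt ℝ 1 Γ (2, 0))
    (hΓγ : ∀ b ∈ Ioo (-δ) δ, Γ (γ b, b) = 0)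
    (hΓa : ∃ U ∈ nhds ((2 : ℝ), (0 : ℝ)), ∀ p ∈ U, fderiv ℝ Γ p (1, 0) < 0)
    (hΓ0 : ∀ a ∈ Ioo (2 : ℝ) (2 + δ), Γ (a, 0) < 0) :
    ∃ δ' > 0, ∀ b ∈ Ioo (0 : ℝ) δ', Γ (atgc b, b) > 0 :=
  nondegeneracy_from_slopes_general δ hδ atgc γ Γ L hdiff hL hLmem hγ hγ0 hγ' hlim hΓC1 hΓγ hΓa
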